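/- Let X and Y be locally compact Hausdorff spaces and let T : C₀(X)⁺ → C₀(Y)⁺ be a bijection satisfying ‖T(f+g)‖ = ‖Tf + Tg‖ for all f, g ∈ C₀(X)⁺. For y ∈ Y set F_y = {f ∈ C₀(X)⁺ : Tf(y) > 0}. Then for each y ∈ Y, the intersection ⋂_{f ∈ F_y} supp(f) consists of exactly one point of X. -/

import Mathlib

/-!
Norm additivity makes `T` additive on the cone: if `T r` is a tall narrow bump at `z`, then
`‖T f + T r‖` is the height of the bump plus `T f z` up to a small error, and norm additivity moves
`r` between the summands. An additive bijection of cones is an order isomorphism, so `F_y` is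
closed under pointwise minima and its supports have the finite intersection property. `F_y`
contains a compactly supported function, since otherwise `T (min f ε) y = T f y` for every `ε > 0`,
and comparing `n • min f (1 / n²)` with `√f` gives `T (√f) y ≥ n * T f y` for all `n`; hence the
intersection is nonempty. It has at most one point: for `x₁ ≠ x₂`, each `f ∈ F_y` splits as `a + b`
with `a` vanishing near `x₁` and `b` near `x₂`, and one of `a`, `b` lies in `F_y`.
-/

open scoped ZeroAtInfty

def posCone (X : Type*) [TopologicalSpace X] : Set C₀(X, ℝ) :=
  {f | ∀ x, 0 ≤ f x}

open Filter Set Topology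

lemma mul_min_one_div_sq_le_sqrt {a k : ℝ} (ha : 0 ≤ a) (hk : 0 < k) :
    k * min a (1 / k ^ 2) ≤ √a := by
  have h₀ : 0 ≤ min a (1 / k ^ 2) := le_min ha (by positivity)
  rw [Real.le_sqrt (by positivity) ha]
  calc (k * min a (1 / k ^ 2)) ^ 2 = k ^ 2 * min a (1 / k ^ 2) * min a (1 / k ^ 2) := by ring
    _ ≤ k ^ 2 * (1 / k ^ 2) * a := by gcongr; exacts [min_le_right _ _, min_le_left _ _]
    _ = a := by field_simp

namespace ZeroAtInftyContinuousMap

variable {α : Type*} [TopologicalSpace α]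

lemma zero_mem_posCone : (0 : C₀(α, ℝ)) ∈ posCone α := fun _ => le_rfl

lemma add_mem_posCone {f g : C₀(α, ℝ)} (hf : f ∈ posCone α) (hg : g ∈ posCone α) :
    f + g ∈ posCone α := fun x => add_nonneg (hf x) (hg x)

lemma nsmul_mem_posCone {f : C₀(α, ℝ)} (hf : f ∈ posCone α) (n : ℕ) : n • f ∈ posCone α :=
  fun x => by simpa using mul_nonneg n.cast_nonneg (hf x)

lemma apply_le_norm (f : C₀(α, ℝ)) (x : α) : f x ≤ ‖f‖ :=
  (le_abs_self _).trans (norm_toBCF_eq_norm (f := f) ▸ f.toBCF.norm_coe_le_norm x)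

lemma norm_le_of_forall_apply_le {f : C₀(α, ℝ)} (hf : f ∈ posCone α) {C : ℝ} (hC : 0 ≤ C)
    (h : ∀ x, f x ≤ C) : ‖f‖ ≤ C := by
  rw [← norm_toBCF_eq_norm, BoundedContinuousFunction.norm_le hC]
  exact fun x => (abs_of_nonneg (hf x)).trans_le (h x)

lemma exists_lt_apply_of_lt_norm {f : C₀(α, ℝ)} (hf : f ∈ posCone α) {t : ℝ} (ht : 0 ≤ t)
    (h : t < ‖f‖) : ∃ x, t < f x := by
  by_contra! hle
  exact h.not_ge (norm_le_of_forall_apply_le hf ht hle)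

lemma norm_add_le_of_le_on_of_le_off {f g : C₀(α, ℝ)} (hf : f ∈ posCone α) (hg : g ∈ posCone α)
    {V : Set α} {a b : ℝ} (hab : 0 ≤ a + b) (hon : ∀ x ∈ V, f x ≤ a ∧ g x ≤ b)
    (hoff : ∀ x ∉ V, f x + g x ≤ a + b) : ‖f + g‖ ≤ a + b := by
  refine norm_le_of_forall_apply_le (add_mem_posCone hf hg) hab fun x => ?_
  by_cases hx : x ∈ V
  · exact add_le_add (hon x hx).1 (hon x hx).2
  · exact hoff x hx

lemma tsupport_subset_of_le {f g : C₀(α, ℝ)} (hf : f ∈ posCone α) (hfg : ∀ x, f x ≤ g x) :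
    tsupport f ⊆ tsupport g :=
  closure_mono fun x hx => (((hf x).lt_of_ne' hx).trans_le (hfg x)).ne'

def compLeft (φ : C(ℝ, ℝ)) (hφ : φ 0 = 0) (f : C₀(α, ℝ)) : C₀(α, ℝ) where
  toContinuousMap := φ.comp f
  zero_at_infty' := by simpa [hφ] using (φ.continuous.tendsto 0).comp (zero_at_infty f)

@[simp] lemma compLeft_apply (φ : C(ℝ, ℝ)) (hφ : φ 0 = 0) (f : C₀(α, ℝ)) (x : α) :
    compLeft φ hφ f x = φ (f x) := rfl

def inf (f g : C₀(α, ℝ)) : C₀(α, ℝ) where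
  toFun x := min (f x) (g x)
  continuous_toFun := by fun_prop
  zero_at_infty' := by simpa using (zero_at_infty f).min (zero_at_infty g)

@[simp] lemma inf_apply (f g : C₀(α, ℝ)) (x : α) : inf f g x = min (f x) (g x) := rfl

lemma inf_mem_posCone {f g : C₀(α, ℝ)} (hf : f ∈ posCone α) (hg : g ∈ posCone α) :
    inf f g ∈ posCone α := fun x => le_min (hf x) (hg x)

lemma hasCompactSupport_sub_compLeft_min (f : C₀(α, ℝ)) {ε : ℝ} (hε : 0 < ε) :
    HasCompactSupport (f - compLeft ⟨(min · ε), by fun_prop⟩ (min_eq_left hε.le) f) := by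
  obtain ⟨K, hK, hKf⟩ := mem_cocompact.mp ((zero_at_infty f).eventually (gt_mem_nhds hε))
  have hclosed : IsClosed {x | ε ≤ f x} := isClosed_le continuous_const f.continuous
  refine .intro' (hK.of_isClosed_subset hclosed fun x hx => ?_) hclosed fun x hx => ?_
  · by_contra hxK
    exact (not_lt.mpr (show ε ≤ f x from hx)) (hKf hxK)
  · simp [min_eq_left (show f x < ε from not_le.mp hx).le]

lemma exists_mem_posCone_bump [RegularSpace α] [LocallyCompactSpace α] {z : α} {V : Set α}
    (hV : IsOpen V) (hz : z ∈ V) {M : ℝ} (hM : 0 ≤ M) :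
    ∃ φ ∈ posCone α, φ z = M ∧ (∀ x, φ x ≤ M) ∧ ∀ x ∉ V, φ x = 0 := by
  obtain ⟨χ, hχz, hχV, hχc, hχI⟩ := exists_continuous_one_zero_of_isCompact isCompact_singleton
    hV.isClosed_compl (disjoint_compl_right_iff_subset.mpr (singleton_subset_iff.mpr hz))
  refine ⟨M • ⟨χ, hχc.is_zero_at_infty⟩, fun x => mul_nonneg hM (hχI x).1, ?_,
    fun x => mul_le_of_le_one_right hM (hχI x).2, fun x hx => ?_⟩
  · show M * χ z = M
    simp [show χ z = 1 from hχz rfl]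
  · show M * χ x = 0
    simp [show χ x = 0 from hχV hx]

lemma exists_add_eq_notMem_tsupport [T2Space α] [LocallyCompactSpace α] {f : C₀(α, ℝ)}
    (hf : f ∈ posCone α) {x₁ x₂ : α} (hne : x₁ ≠ x₂) :
    ∃ a ∈ posCone α, ∃ b ∈ posCone α, a + b = f ∧ x₁ ∉ tsupport a ∧ x₂ ∉ tsupport b := by
  obtain ⟨U₁, U₂, hU₁, hU₂, hx₁, hx₂, hdisj⟩ := t2_separation hne
  obtain ⟨K, hK, hx₂K, hKU⟩ := exists_compact_subset hU₂ hx₂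
  obtain ⟨χ, hχK, hχU, hχc, hχI⟩ := exists_continuous_one_zero_of_isCompact hK
    hU₂.isClosed_compl (disjoint_compl_right_iff_subset.mpr hKU)
  set a := f * ⟨χ, hχc.is_zero_at_infty⟩
  refine ⟨a, fun x => mul_nonneg (hf x) (hχI x).1, f - a, fun x => ?_, add_sub_cancel _ _, ?_, ?_⟩
  · show 0 ≤ f x - f x * χ x
    nlinarith [hf x, (hχI x).2]
  · rw [notMem_tsupport_iff_eventuallyEq]
    filter_upwards [hU₁.mem_nhds hx₁] with x hx
    show f x * χ x = 0
    simp [show χ x = 0 from hχU (disjoint_left.mp hdisj hx)]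
  · rw [notMem_tsupport_iff_eventuallyEq]
    filter_upwards [mem_interior_iff_mem_nhds.mp hx₂K] with x hx
    show f x - f x * χ x = 0
    simp [show χ x = 1 from hχK hx]

end ZeroAtInftyContinuousMap

open ZeroAtInftyContinuousMap hiding add_apply

structure IsNormAdditiveBij {X Y : Type*} [TopologicalSpace X] [TopologicalSpace Y]
    (T : C₀(X, ℝ) → C₀(Y, ℝ)) : Prop where
  bijOn : BijOn T (posCone X) (posCone Y)
  norm_map_add : ∀ f ∈ posCone X, ∀ g ∈ posCone X, ‖T (f + g)‖ = ‖T f + T g‖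

/-- `F_y` in the informal statement. -/
def positiveAt {X Y : Type*} [TopologicalSpace X] [TopologicalSpace Y]
    (T : C₀(X, ℝ) → C₀(Y, ℝ)) (y : Y) : Set C₀(X, ℝ) :=
  {g | g ∈ posCone X ∧ 0 < T g y}

namespace IsNormAdditiveBij

variable {X Y : Type*} [TopologicalSpace X] [TopologicalSpace Y] {T : C₀(X, ℝ) → C₀(Y, ℝ)}

lemma apply_nonneg (hT : IsNormAdditiveBij T) {f : C₀(X, ℝ)} (hf : f ∈ posCone X) (y : Y) :
    0 ≤ T f y :=
  hT.bijOn.mapsTo hf y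

lemma norm_add_map_add_comm (hT : IsNormAdditiveBij T) {f g h : C₀(X, ℝ)} (hf : f ∈ posCone X)
    (hg : g ∈ posCone X) (hh : h ∈ posCone X) : ‖T f + T (g + h)‖ = ‖T g + T (f + h)‖ := by
  rw [← hT.norm_map_add f hf _ (add_mem_posCone hg hh),
    ← hT.norm_map_add g hg _ (add_mem_posCone hf hh), add_left_comm]

section Bumps

variable [RegularSpace Y] [LocallyCompactSpace Y]

lemma exists_map_eq_bump (hT : IsNormAdditiveBij T) {z : Y} {V : Set Y} (hV : IsOpen V)
    (hz : z ∈ V) {M : ℝ} (hM : 0 ≤ M) :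
    ∃ r ∈ posCone X, T r z = M ∧ (∀ w, T r w ≤ M) ∧ ∀ w ∉ V, T r w = 0 := by
  obtain ⟨φ, hφ, hbump⟩ := exists_mem_posCone_bump hV hz hM
  obtain ⟨r, hr, rfl⟩ := hT.bijOn.surjOn hφ
  exact ⟨r, hr, hbump⟩

lemma apply_add_le_norm_add_apply (hT : IsNormAdditiveBij T) {g h : C₀(X, ℝ)}
    (hg : g ∈ posCone X) (hh : h ∈ posCone X) (z : Y) : T (g + h) z ≤ ‖T g‖ + T h z := by
  refine le_of_forall_pos_le_add fun ε hε => ?_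
  have hhz := hT.apply_nonneg hh z
  obtain ⟨r, hr, hrz, hrM, hrV⟩ := hT.exists_map_eq_bump
    (isOpen_lt (T h).continuous continuous_const) (show T h z < T h z + ε by linarith)
    (norm_nonneg (T h))
  have hbump : ‖T r + T h‖ ≤ ‖T h‖ + (T h z + ε) :=
    norm_add_le_of_le_on_of_le_off (hT.bijOn.mapsTo hr) (hT.bijOn.mapsTo hh) (by positivity)
      (fun w hw => ⟨hrM w, le_of_lt hw⟩)
      (fun w hw => by rw [hrV w hw, zero_add]; linarith [apply_le_norm (T h) w])
  have : ‖T h‖ + T (g + h) z ≤ ‖T g‖ + (‖T h‖ + (T h z + ε)) :=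
    calc ‖T h‖ + T (g + h) z = (T r + T (g + h)) z := by
          rw [ZeroAtInftyContinuousMap.add_apply, hrz]
      _ ≤ ‖T r + T (g + h)‖ := apply_le_norm _ z
      _ = ‖T g + T (r + h)‖ := hT.norm_add_map_add_comm hr hg hh
      _ ≤ ‖T g‖ + ‖T r + T h‖ := by rw [← hT.norm_map_add r hr h hh]; exact norm_add_le _ _
      _ ≤ ‖T g‖ + (‖T h‖ + (T h z + ε)) := by gcongr
  linarith

lemma apply_add_apply_le (hT : IsNormAdditiveBij T) {g h : C₀(X, ℝ)}
    (hg : g ∈ posCone X) (hh : h ∈ posCone X) (z : Y) : T g z + T h z ≤ T (g + h) z := by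
  refine le_of_forall_pos_le_add fun ε hε => ?_
  obtain ⟨δ, hδ, rfl⟩ : ∃ δ, 0 < δ ∧ ε = 3 * δ := ⟨ε / 3, by positivity, by ring⟩
  have hgh := add_mem_posCone hg hh
  have hhz := hT.apply_nonneg hh z
  have hghz := hT.apply_nonneg hgh z
  set M := ‖T h‖ + ‖T (g + h)‖ + δ with hM
  set V := {w | T g z - δ < T g w} ∩ {w | T (g + h) w < T (g + h) z + δ}
  obtain ⟨r, hr, hrz, hrM, hrV⟩ := hT.exists_map_eq_bump (M := M) (V := V)
    ((isOpen_lt continuous_const (T g).continuous).inter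
      (isOpen_lt (T (g + h)).continuous continuous_const))
    ⟨show T g z - δ < T g z by linarith, show T (g + h) z < T (g + h) z + δ by linarith⟩
    (by positivity)
  have hpeak : M + T h z ≤ ‖T (r + h)‖ := by
    rw [hT.norm_map_add r hr h hh, ← hrz, ← ZeroAtInftyContinuousMap.add_apply]
    exact apply_le_norm _ z
  obtain ⟨z₀, hz₀⟩ := exists_lt_apply_of_lt_norm (hT.bijOn.mapsTo (add_mem_posCone hr hh))
    (t := M + T h z - δ) (by linarith [norm_nonneg (T h), norm_nonneg (T (g + h))])
    (by linarith)
  -- `T (r + h) ≤ ‖T h‖ + T r` keeps the near-maximum `z₀` of `T (r + h)` inside the bump.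
  have hz₀V : T g z - δ < T g z₀ := by
    by_contra hz₀V
    have := hT.apply_add_le_norm_add_apply hh hr z₀
    rw [add_comm h r, hrV z₀ (fun hV => hz₀V hV.1), add_zero] at this
    linarith [norm_nonneg (T (g + h))]
  have hup : ‖T r + T (g + h)‖ ≤ M + (T (g + h) z + δ) :=
    norm_add_le_of_le_on_of_le_off (V := V) (hT.bijOn.mapsTo hr) (hT.bijOn.mapsTo hgh)
      (by positivity) (fun w hw => ⟨hrM w, le_of_lt hw.2⟩)
      (fun w hw => by
        rw [hrV w hw, zero_add]
        linarith [apply_le_norm (T (g + h)) w, norm_nonneg (T h)])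
  have hlow : T g z - δ + (M + T h z - δ) < ‖T g + T (r + h)‖ :=
    (add_lt_add hz₀V hz₀).trans_le (apply_le_norm (T g + T (r + h)) z₀)
  rw [← hT.norm_add_map_add_comm hr hg hh] at hlow
  linarith

lemma map_add (hT : IsNormAdditiveBij T) {p q : C₀(X, ℝ)} (hp : p ∈ posCone X)
    (hq : q ∈ posCone X) : T (p + q) = T p + T q := by
  ext z
  refine le_antisymm ?_ (hT.apply_add_apply_le hp hq z)
  refine le_of_forall_pos_le_add fun ε hε => ?_
  obtain ⟨δ, hδ, rfl⟩ : ∃ δ, 0 < δ ∧ ε = 2 * δ := ⟨ε / 2, by positivity, by ring⟩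
  have hpz := hT.apply_nonneg hp z
  have hqz := hT.apply_nonneg hq z
  set M := ‖T p‖ + ‖T q‖ with hM
  set V := {w | T p w < T p z + δ} ∩ {w | T q w < T q z + δ}
  obtain ⟨r, hr, hrz, hrM, hrV⟩ := hT.exists_map_eq_bump (M := M) (V := V)
    ((isOpen_lt (T p).continuous continuous_const).inter
      (isOpen_lt (T q).continuous continuous_const))
    ⟨show T p z < T p z + δ by linarith, show T q z < T q z + δ by linarith⟩ (by positivity)
  have hqr : ‖T (q + r)‖ ≤ M + (T q z + δ) := by
    rw [hT.norm_map_add q hq r hr, add_comm (T q)]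
    exact norm_add_le_of_le_on_of_le_off (V := V) (hT.bijOn.mapsTo hr) (hT.bijOn.mapsTo hq)
      (by positivity) (fun w hw => ⟨hrM w, le_of_lt hw.2⟩)
      (fun w hw => by
        rw [hrV w hw, zero_add]
        linarith [apply_le_norm (T q) w, norm_nonneg (T p)])
  have hup : ‖T p + T (q + r)‖ ≤ (T p z + δ) + (M + (T q z + δ)) :=
    norm_add_le_of_le_on_of_le_off (V := V) (hT.bijOn.mapsTo hp)
      (hT.bijOn.mapsTo (add_mem_posCone hq hr)) (by positivity)
      (fun w hw => ⟨le_of_lt hw.1, (apply_le_norm _ w).trans hqr⟩)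
      (fun w hw => by
        have := hT.apply_add_le_norm_add_apply hq hr w
        rw [hrV w hw] at this
        linarith [apply_le_norm (T p) w])
  have hlow : M + T (p + q) z ≤ ‖T p + T (q + r)‖ :=
    calc M + T (p + q) z = T (p + q) z + T r z := by rw [hrz, add_comm]
      _ ≤ T (p + q + r) z := hT.apply_add_apply_le (add_mem_posCone hp hq) hr z
      _ ≤ ‖T (p + q + r)‖ := apply_le_norm _ z
      _ = ‖T p + T (q + r)‖ := by
        rw [add_assoc, hT.norm_map_add p hp _ (add_mem_posCone hq hr)]
  rw [ZeroAtInftyContinuousMap.add_apply]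
  linarith

lemma map_zero (hT : IsNormAdditiveBij T) : T 0 = 0 := by
  have := hT.map_add zero_mem_posCone zero_mem_posCone
  rwa [add_zero, left_eq_add] at this

lemma map_nsmul (hT : IsNormAdditiveBij T) {f : C₀(X, ℝ)} (hf : f ∈ posCone X) (n : ℕ) :
    T (n • f) = n • T f := by
  induction n with
  | zero => simp [hT.map_zero]
  | succ n ih => rw [succ_nsmul, hT.map_add (nsmul_mem_posCone hf n) hf, ih, succ_nsmul]

lemma apply_mono (hT : IsNormAdditiveBij T) {f g : C₀(X, ℝ)} (hf : f ∈ posCone X)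
    (hfg : ∀ x, f x ≤ g x) (y : Y) : T f y ≤ T g y := by
  have hd : g - f ∈ posCone X := fun x => sub_nonneg.mpr (hfg x)
  rw [← add_sub_cancel f g, hT.map_add hf hd, ZeroAtInftyContinuousMap.add_apply]
  exact le_add_of_nonneg_right (hT.apply_nonneg hd y)

lemma le_of_map_le (hT : IsNormAdditiveBij T) {f g : C₀(X, ℝ)} (hf : f ∈ posCone X)
    (hg : g ∈ posCone X) (hfg : ∀ y, T f y ≤ T g y) (x : X) : f x ≤ g x := by
  obtain ⟨d, hd, hTd⟩ := hT.bijOn.surjOn (show T g - T f ∈ posCone Y from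
    fun y => sub_nonneg.mpr (hfg y))
  have hfd : f + d = g := hT.bijOn.injOn (add_mem_posCone hf hd) hg
    (by rw [hT.map_add hf hd, hTd, add_sub_cancel])
  rw [← hfd, ZeroAtInftyContinuousMap.add_apply]
  exact le_add_of_nonneg_right (hd x)

lemma min_le_map_inf (hT : IsNormAdditiveBij T) {f g : C₀(X, ℝ)} (hf : f ∈ posCone X)
    (hg : g ∈ posCone X) (y : Y) : min (T f y) (T g y) ≤ T (inf f g) y := by
  obtain ⟨c, hc, hTc⟩ :=
    hT.bijOn.surjOn (inf_mem_posCone (hT.bijOn.mapsTo hf) (hT.bijOn.mapsTo hg))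
  have hcf := hT.le_of_map_le hc hf fun y => by rw [hTc, inf_apply]; exact min_le_left _ _
  have hcg := hT.le_of_map_le hc hg fun y => by rw [hTc, inf_apply]; exact min_le_right _ _
  have := hT.apply_mono (g := inf f g) hc (fun x => le_min (hcf x) (hcg x)) y
  rwa [hTc, inf_apply] at this

lemma inf_mem_positiveAt (hT : IsNormAdditiveBij T) {y : Y} {f g : C₀(X, ℝ)}
    (hf : f ∈ positiveAt T y) (hg : g ∈ positiveAt T y) : inf f g ∈ positiveAt T y :=
  ⟨inf_mem_posCone hf.1 hg.1, (lt_min hf.2 hg.2).trans_le (hT.min_le_map_inf hf.1 hg.1 y)⟩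

lemma nonempty_tsupport (hT : IsNormAdditiveBij T) {y : Y} {f : C₀(X, ℝ)}
    (hf : f ∈ positiveAt T y) : (tsupport f).Nonempty := by
  rw [nonempty_iff_ne_empty, Ne, tsupport_eq_empty_iff]
  intro h
  have hf0 : f = 0 := DFunLike.coe_injective h
  have := hf.2
  rw [hf0, hT.map_zero] at this
  exact this.false

lemma exists_hasCompactSupport_mem_positiveAt (hT : IsNormAdditiveBij T) {y : Y}
    {f : C₀(X, ℝ)} (hf : f ∈ positiveAt T y) :
    ∃ g ∈ positiveAt T y, HasCompactSupport g := by
  by_contra! hnone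
  have htrunc : ∀ ε > 0, ∃ l ∈ posCone X, (∀ x, l x = min (f x) ε) ∧ T l y = T f y := by
    intro ε hε
    set l := compLeft ⟨(min · ε), by fun_prop⟩ (min_eq_left hε.le) f
    have hl : l ∈ posCone X := fun x => le_min (hf.1 x) hε.le
    have hfl : f - l ∈ posCone X := fun x => sub_nonneg.mpr (min_le_left _ _)
    have hzero : T (f - l) y = 0 := (hT.apply_nonneg hfl y).antisymm' <| not_lt.mp fun hpos =>
      hnone _ ⟨hfl, hpos⟩ (hasCompactSupport_sub_compLeft_min f hε)
    refine ⟨l, hl, fun _ => rfl, ?_⟩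
    rw [← sub_add_cancel f l, hT.map_add hfl hl, ZeroAtInftyContinuousMap.add_apply, hzero,
      zero_add]
  set s := compLeft ⟨Real.sqrt, Real.continuous_sqrt⟩ Real.sqrt_zero f
  have hs : s ∈ posCone X := fun x => Real.sqrt_nonneg _
  have hbound (n : ℕ) (hn : 0 < n) : n * T f y ≤ T s y := by
    obtain ⟨l, hl, hlx, hly⟩ := htrunc (1 / (n : ℝ) ^ 2) (by positivity)
    have := hT.apply_mono (g := s) (nsmul_mem_posCone hl n) (fun x => by
      simpa [hlx, s] using mul_min_one_div_sq_le_sqrt (hf.1 x) (Nat.cast_pos.mpr hn)) y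
    simpa [hT.map_nsmul hl, hly] using this
  obtain ⟨n, hn⟩ := exists_nat_gt (T s y / T f y)
  have hn0 : 0 < n := Nat.cast_pos.mp <|
    (div_nonneg (hT.apply_nonneg hs y) (hT.apply_nonneg hf.1 y)).trans_lt hn
  rw [div_lt_iff₀ hf.2] at hn
  linarith [hbound n hn0]

lemma nonempty_iInter_tsupport (hT : IsNormAdditiveBij T) {y : Y} {f : C₀(X, ℝ)}
    (hf : f ∈ positiveAt T y) : (⋂ g ∈ positiveAt T y, tsupport g).Nonempty := by
  obtain ⟨k, hk, hkc⟩ := hT.exists_hasCompactSupport_mem_positiveAt hf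
  have : Nonempty (positiveAt T y) := ⟨⟨k, hk⟩⟩
  -- Cutting every member down to `inf k g` makes the supports compact.
  obtain ⟨x, hx⟩ := IsCompact.nonempty_iInter_of_directed_nonempty_isCompact_isClosed
    (fun g : positiveAt T y => tsupport (inf k g))
    (fun g g' => ⟨⟨inf g g', hT.inf_mem_positiveAt g.2 g'.2⟩,
      tsupport_subset_of_le (inf_mem_posCone hk.1 (inf_mem_posCone g.2.1 g'.2.1))
        fun x => min_le_min_left _ (min_le_left _ _),
      tsupport_subset_of_le (inf_mem_posCone hk.1 (inf_mem_posCone g.2.1 g'.2.1))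
        fun x => min_le_min_left _ (min_le_right _ _)⟩)
    (fun g => hT.nonempty_tsupport (hT.inf_mem_positiveAt hk g.2))
    (fun g => hkc.of_isClosed_subset (isClosed_tsupport _)
      (tsupport_subset_of_le (inf_mem_posCone hk.1 g.2.1) fun x => min_le_left _ _))
    (fun _ => isClosed_tsupport _)
  refine ⟨x, mem_iInter₂.mpr fun g hg => ?_⟩
  exact tsupport_subset_of_le (inf_mem_posCone hk.1 hg.1) (fun x => min_le_right _ _)
    (mem_iInter.mp hx ⟨g, hg⟩)

lemma subsingleton_iInter_tsupport (hT : IsNormAdditiveBij T) [T2Space X]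
    [LocallyCompactSpace X] {y : Y} {f : C₀(X, ℝ)} (hf : f ∈ positiveAt T y) :
    (⋂ g ∈ positiveAt T y, tsupport g).Subsingleton := by
  intro x₁ hx₁ x₂ hx₂
  by_contra hne
  obtain ⟨a, ha, b, hb, rfl, ha₁, hb₂⟩ := exists_add_eq_notMem_tsupport hf.1 hne
  have hsum := hf.2
  rw [hT.map_add ha hb, ZeroAtInftyContinuousMap.add_apply] at hsum
  by_cases hay : 0 < T a y
  · exact ha₁ (mem_iInter₂.mp hx₁ a ⟨ha, hay⟩)
  · exact hb₂ (mem_iInter₂.mp hx₂ b ⟨hb, by linarith⟩)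

end Bumps

end IsNormAdditiveBij

/-- **Lemma 2.10.** Let `T` be a norm additive bijection between positive cones. For
each `y ∈ Y`, the intersection `⋂_{f ∈ F_y} supp(f)`, where
`F_y = {f ∈ C₀(X)⁺ : Tf(y) > 0}`, consists of exactly one point. -/
theorem stmt9 {X Y : Type*} [TopologicalSpace X] [T2Space X] [LocallyCompactSpace X]
    [TopologicalSpace Y] [T2Space Y] [LocallyCompactSpace Y]
    (T : C₀(X, ℝ) → C₀(Y, ℝ))
    (hbij : Set.BijOn T (posCone X) (posCone Y))
    (hnorm : ∀ f ∈ posCone X, ∀ g ∈ posCone X, ‖T (f + g)‖ = ‖T f + T g‖) :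
    ∀ y : Y, ∃ x : X,
      (⋂ f ∈ {g : C₀(X, ℝ) | g ∈ posCone X ∧ 0 < T g y}, tsupport (⇑f : X → ℝ))
        = {x} := by
  intro y
  have hT : IsNormAdditiveBij T := ⟨hbij, hnorm⟩
  obtain ⟨f, hf, hfy, -⟩ := hT.exists_map_eq_bump isOpen_univ (mem_univ y) zero_le_one
  have hfF : f ∈ positiveAt T y := ⟨hf, hfy ▸ one_pos⟩
  exact exists_eq_singleton_iff_nonempty_subsingleton.mpr
    ⟨hT.nonempty_iInter_tsupport hfF, hT.subsingleton_iInter_tsupport hfF⟩
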